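/- arXiv:2305.04918 — 2 statements merged into one kernel-verified Lean document; each statement's English description precedes it below -/
import Mathlib

section
/- Let a bi-matrix game on n ≥ 2 pure strategies have all payoff entries in [0,1], and suppose the game possesses at least one Nash equilibrium. Then, with δ = 1/n, the game has a (δ, 4δ)-far Nash equilibrium: there exists a 4/n-Nash equilibrium (x, y) with ‖x − y‖₁ ≥ 2/n. -/
open Finset

/-- The probability simplex over a finite strategy set `S`. -/
def simplex (S : Type*) [Fintype S] : Set (S → ℝ) :=
  {x | (∀ i, 0 ≤ x i) ∧ ∑ i, x i = 1}

/-- Expected payoff `Σᵢⱼ xᵢ yⱼ A i j`. -/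
def payoff {S : Type*} [Fintype S] (A : S → S → ℝ) (x y : S → ℝ) : ℝ :=
  ∑ i, ∑ j, x i * y j * A i j

/-- The point mass at pure strategy `s`. -/
def pureStrat {S : Type*} [DecidableEq S] (s : S) : S → ℝ :=
  fun i => if i = s then 1 else 0

/-- Support of a mixed strategy. -/
def supp {S : Type*} (x : S → ℝ) : Set S := {i | 0 < x i}

/-- L1 distance between mixed strategies. -/
def dist1 {S : Type*} [Fintype S] (x y : S → ℝ) : ℝ := ∑ i, |x i - y i|

/-- `(x, y)` is an ε-Nash equilibrium of the bi-matrix game `(R, C)`. -/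
def IsEpsNash {S : Type*} [Fintype S] [DecidableEq S]
    (R C : S → S → ℝ) (x y : S → ℝ) (ε : ℝ) : Prop :=
  x ∈ simplex S ∧ y ∈ simplex S ∧
  (∀ s : S, payoff R (pureStrat s) y ≤ payoff R x y + ε) ∧
  (∀ s : S, payoff C x (pureStrat s) ≤ payoff C x y + ε)

/-!
Moving a Nash equilibrium `(x, y)` by ℓ₁-distance `d` (in total over both strategies) changes
every expected payoff by at most `d`, so it yields a `2d`-Nash equilibrium. It therefore suffices
to move `(x, y)` by total distance `2/n` to a profile whose two strategies are `2/n` apart. Pick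
`j` with `y j ≤ x j`. Shifting mass `1/n` of `x` onto `j` works unless `x j > 1 - 1/n`; then `e_j`
works unless also `y j > 1 - 1/n`, and in that case shift mass `1/n` of `y` onto some `k ≠ j`
with `x k ≤ y k`.
-/

section Geometry

variable {S : Type*}

theorem pureStrat_eq_single [DecidableEq S] (s : S) : pureStrat s = Pi.single s 1 :=
  funext fun i => (Pi.single_apply s 1 i).symm

variable [Fintype S]

theorem dist1_nonneg (x y : S → ℝ) : 0 ≤ dist1 x y :=
  sum_nonneg fun _ _ => abs_nonneg _

theorem dist1_self (x : S → ℝ) : dist1 x x = 0 := by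
  simp [dist1]

theorem dist1_comm (x y : S → ℝ) : dist1 x y = dist1 y x :=
  sum_congr rfl fun _ _ => abs_sub_comm _ _

theorem dist1_convexCombination_left (x z : S → ℝ) {t : ℝ} (ht : 0 ≤ t) :
    dist1 ((1 - t) • x + t • z) x = t * dist1 z x := by
  simp only [dist1, mul_sum, Pi.add_apply, Pi.smul_apply, smul_eq_mul]
  refine sum_congr rfl fun i _ => ?_
  rw [show (1 - t) * x i + t * z i - x i = t * (z i - x i) by ring, abs_mul, abs_of_nonneg ht]

variable [DecidableEq S]

theorem sum_erase_of_mem_simplex {x : S → ℝ} (hx : x ∈ simplex S) (j : S) :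
    ∑ i ∈ univ.erase j, x i = 1 - x j := by
  rw [sum_erase_eq_sub (mem_univ j), hx.2]

theorem pureStrat_mem_simplex (s : S) : pureStrat s ∈ simplex S := by
  rw [pureStrat_eq_single]; exact single_mem_stdSimplex ℝ s

theorem two_mul_abs_sub_le_dist1 {x y : S → ℝ} (hx : x ∈ simplex S) (hy : y ∈ simplex S)
    (j : S) : 2 * |x j - y j| ≤ dist1 x y := by
  have hj : x j - y j = -∑ i ∈ univ.erase j, (x i - y i) := by
    rw [sum_sub_distrib, sum_erase_of_mem_simplex hx, sum_erase_of_mem_simplex hy]; ring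
  have hrest : |x j - y j| ≤ ∑ i ∈ univ.erase j, |x i - y i| := by
    rw [hj, abs_neg]; exact abs_sum_le_sum_abs _ _
  rw [dist1, ← add_sum_erase _ _ (mem_univ j)]
  linarith

theorem dist1_pureStrat {x : S → ℝ} (hx : x ∈ simplex S) (j : S) :
    dist1 (pureStrat j) x = 2 * (1 - x j) := by
  have hoff : ∀ i ∈ univ.erase j, |pureStrat j i - x i| = x i := fun i hi => by
    rw [pureStrat, if_neg (ne_of_mem_erase hi), zero_sub, abs_neg, abs_of_nonneg (hx.1 i)]
  have hxj : 0 ≤ 1 - x j := sum_erase_of_mem_simplex hx j ▸ sum_nonneg fun i _ => hx.1 i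
  rw [dist1, ← add_sum_erase _ _ (mem_univ j), sum_congr rfl hoff, sum_erase_of_mem_simplex hx,
    pureStrat, if_pos rfl, abs_of_nonneg hxj]
  ring

theorem exists_near_far_of_le {x y : S → ℝ} (hx : x ∈ simplex S) (hy : y ∈ simplex S)
    {δ : ℝ} (hδ : 0 < δ) {j : S} (hyx : y j ≤ x j) (hxj : δ ≤ 1 - x j) :
    ∃ x' ∈ simplex S, dist1 x' x = 2 * δ ∧ 2 * δ ≤ dist1 x' y := by
  -- `x'` shifts mass `δ` of `x` onto `j`
  set t := δ / (1 - x j)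
  have hmass : t * (1 - x j) = δ := div_mul_cancel₀ δ (by linarith)
  have ht0 : 0 ≤ t := div_nonneg hδ.le (by linarith)
  have ht1 : t ≤ 1 := (div_le_one (by linarith)).2 hxj
  -- `simplex S` is `stdSimplex ℝ S` by definition
  have hx' : (1 - t) • x + t • pureStrat j ∈ simplex S :=
    convex_stdSimplex ℝ S hx (pureStrat_mem_simplex j) (by linarith) ht0 (by ring)
  refine ⟨_, hx', ?_, ?_⟩
  · rw [dist1_convexCombination_left _ _ ht0, dist1_pureStrat hx]
    linarith
  · have hcoord : ((1 - t) • x + t • pureStrat j) j - y j = x j - y j + δ := by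
      simp only [Pi.add_apply, Pi.smul_apply, smul_eq_mul, pureStrat, ↓reduceIte]
      linear_combination hmass
    have := two_mul_abs_sub_le_dist1 hx' hy j
    rw [hcoord, abs_of_nonneg (by linarith)] at this
    linarith

theorem exists_near_far (hS : 2 ≤ Fintype.card S) {x y : S → ℝ} (hx : x ∈ simplex S)
    (hy : y ∈ simplex S) :
    ∃ x' ∈ simplex S, ∃ y' ∈ simplex S,
      dist1 x' x + dist1 y' y ≤ 2 / Fintype.card S ∧ 2 / Fintype.card S ≤ dist1 x' y' := by
  set δ : ℝ := 1 / Fintype.card S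
  have hcard : (2 : ℝ) ≤ Fintype.card S := by exact_mod_cast hS
  have hδ : 0 < δ := by positivity
  have hδ_half : δ ≤ 1 / 2 := one_div_le_one_div_of_le two_pos hcard
  have h2δ : 2 / (Fintype.card S : ℝ) = 2 * δ := by ring
  rw [h2δ]
  have hne : (univ : Finset S).Nonempty := univ_nonempty_iff.2 (Fintype.card_pos_iff.1 (by omega))
  obtain ⟨j, -, hyx⟩ := exists_le_of_sum_le (f := y) (g := x) hne (by rw [hx.2, hy.2])
  by_cases hxj : δ ≤ 1 - x j
  · obtain ⟨x', hx', hnear, hfar⟩ := exists_near_far_of_le hx hy hδ hyx hxj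
    exact ⟨x', hx', y, hy, by rw [hnear, dist1_self, add_zero], hfar⟩
  by_cases hyj : δ ≤ 1 - y j
  · refine ⟨pureStrat j, pureStrat_mem_simplex j, y, hy, ?_, ?_⟩
    · rw [dist1_pureStrat hx, dist1_self]; linarith
    · rw [dist1_pureStrat hy]; linarith
  -- both `x` and `y` put more than `1 - δ` on `j`: move `y` towards a `k ≠ j` with `x k ≤ y k`
  have hne' : (univ.erase j).Nonempty := by
    rw [← card_pos, card_erase_of_mem (mem_univ j), card_univ]; omega
  obtain ⟨k, hk, hxy⟩ := exists_le_of_sum_le (f := x) (g := y) hne' (by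
    rw [sum_erase_of_mem_simplex hx, sum_erase_of_mem_simplex hy]; linarith)
  have hyk : y k ≤ 1 - y j := by
    rw [← sum_erase_of_mem_simplex hy]
    exact single_le_sum (fun i _ => hy.1 i) hk
  obtain ⟨y', hy', hnear, hfar⟩ := exists_near_far_of_le hy hx hδ hxy (by linarith)
  exact ⟨x, hx, y', hy', by rw [hnear, dist1_self, zero_add], by rwa [dist1_comm]⟩

end Geometry

section Payoff

variable {S : Type*} [Fintype S]

theorem payoff_transpose (A : S → S → ℝ) (x y : S → ℝ) :
    payoff (fun i j => A j i) y x = payoff A x y := by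
  rw [payoff, payoff, sum_comm]
  exact sum_congr rfl fun i _ => sum_congr rfl fun j _ => by ring

theorem abs_payoff_sub_payoff_left_le {A : S → S → ℝ} (hA : ∀ i j, |A i j| ≤ 1)
    (x x' : S → ℝ) {y : S → ℝ} (hy : y ∈ simplex S) :
    |payoff A x' y - payoff A x y| ≤ dist1 x' x := by
  have hrow : ∀ i, |∑ j, y j * A i j| ≤ 1 := fun i =>
    calc |∑ j, y j * A i j| ≤ ∑ j, y j := by
          refine (abs_sum_le_sum_abs _ _).trans (sum_le_sum fun j _ => ?_)
          rw [abs_mul, abs_of_nonneg (hy.1 j)]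
          exact mul_le_of_le_one_right (hy.1 j) (hA i j)
      _ = 1 := hy.2
  have hdiff : payoff A x' y - payoff A x y = ∑ i, (x' i - x i) * ∑ j, y j * A i j := by
    simp only [payoff, ← sum_sub_distrib, mul_sum]
    exact sum_congr rfl fun i _ => sum_congr rfl fun j _ => by ring
  rw [hdiff]
  refine (abs_sum_le_sum_abs _ _).trans (sum_le_sum fun i _ => ?_)
  rw [abs_mul]
  exact mul_le_of_le_one_right (abs_nonneg _) (hrow i)

theorem abs_payoff_sub_payoff_right_le {A : S → S → ℝ} (hA : ∀ i j, |A i j| ≤ 1)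
    {x : S → ℝ} (hx : x ∈ simplex S) (y y' : S → ℝ) :
    |payoff A x y' - payoff A x y| ≤ dist1 y' y := by
  rw [← payoff_transpose A, ← payoff_transpose A]
  exact abs_payoff_sub_payoff_left_le (fun i j => hA j i) y y' hx

theorem abs_payoff_sub_payoff_le {A : S → S → ℝ} (hA : ∀ i j, |A i j| ≤ 1)
    {x x' y y' : S → ℝ} (hx : x ∈ simplex S) (hy' : y' ∈ simplex S) :
    |payoff A x' y' - payoff A x y| ≤ dist1 x' x + dist1 y' y := by
  have h₁ := abs_payoff_sub_payoff_left_le hA x x' hy'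
  have h₂ := abs_payoff_sub_payoff_right_le hA hx y y'
  calc |payoff A x' y' - payoff A x y|
      = |(payoff A x' y' - payoff A x y') + (payoff A x y' - payoff A x y)| := by congr 1; ring
    _ ≤ _ := (abs_add_le _ _).trans (add_le_add h₁ h₂)

/-- Moving the profile by `a` in the row strategy and `b` in the column strategy changes every
player's regret by at most `a + 2b`, resp. `2a + b`. -/
theorem IsEpsNash.of_dist1_le [DecidableEq S] {R C : S → S → ℝ} {x y x' y' : S → ℝ} {ε ε' : ℝ}
    (h : IsEpsNash R C x y ε) (hR : ∀ i j, |R i j| ≤ 1) (hC : ∀ i j, |C i j| ≤ 1)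
    (hx' : x' ∈ simplex S) (hy' : y' ∈ simplex S)
    (hε : ε + 2 * (dist1 x' x + dist1 y' y) ≤ ε') :
    IsEpsNash R C x' y' ε' := by
  obtain ⟨hx, hy, hrow, hcol⟩ := h
  have ha := dist1_nonneg x' x
  have hb := dist1_nonneg y' y
  refine ⟨hx', hy', fun s => ?_, fun s => ?_⟩
  · have h₁ := abs_le.1 (abs_payoff_sub_payoff_right_le hR (pureStrat_mem_simplex s) y y')
    have h₂ := abs_le.1 (abs_payoff_sub_payoff_le hR hx hy' (x' := x') (y := y))
    linarith [hrow s]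
  · have h₁ := abs_le.1 (abs_payoff_sub_payoff_left_le hC x x' (pureStrat_mem_simplex s))
    have h₂ := abs_le.1 (abs_payoff_sub_payoff_le hC hx hy' (x' := x') (y := y))
    linarith [hcol s]

end Payoff

theorem stmt3 {n : ℕ} (hn : 2 ≤ n) (R C : Fin n → Fin n → ℝ)
    (hR : ∀ i j, R i j ∈ Set.Icc (0 : ℝ) 1) (hC : ∀ i j, C i j ∈ Set.Icc (0 : ℝ) 1)
    (hex : ∃ x y : Fin n → ℝ, IsEpsNash R C x y 0) :
    ∃ x y : Fin n → ℝ, IsEpsNash R C x y (4 / (n : ℝ)) ∧ dist1 x y ≥ 2 / (n : ℝ) := by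
  obtain ⟨x, y, hNash⟩ := hex
  have habs : ∀ A : Fin n → Fin n → ℝ, (∀ i j, A i j ∈ Set.Icc (0 : ℝ) 1) → ∀ i j, |A i j| ≤ 1 :=
    fun A hA i j => abs_le.2 ⟨by linarith [(hA i j).1], (hA i j).2⟩
  obtain ⟨x', hx', y', hy', hnear, hfar⟩ :=
    exists_near_far (by rwa [Fintype.card_fin]) hNash.1 hNash.2.1
  rw [Fintype.card_fin] at hnear hfar
  have hε : (0 : ℝ) + 2 * (dist1 x' x + dist1 y' y) ≤ 4 / n := by
    linarith [show (4 : ℝ) / n = 2 * (2 / n) by ring]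
  exact ⟨x', y', hNash.of_dist1_le (habs R hR) (habs C hC) hx' hy' hε, hfar⟩
end

section
/- Let G = (R, C) be a bi-matrix game on n pure strategies and let σ be strictly less than every entry of R and C. Define the duplicated game G′ on strategy set Fin n ⊕ Fin n (strategies S₁ = inl copies, S₂ = inr copies) by: U′₁(inl i, inr j) = U′₁(inl i, inl j) = R i j, U′₁(inr i, b) = σ for all b; U′₂(inl i, inr j) = U′₂(inr i, inr j) = C i j, U′₂(a, inl j) = σ for all a. Then: (i) for every Nash equilibrium (x, y) of G, the lifted profile (ι₁ x, ι₂ y) — where ι₁ x puts weight xᵢ on inl i and ι₂ y puts weight yⱼ on inr j — is a Nash equilibrium of G′ with disjoint supports; and (ii) every Nash equilibrium of G′ is of the form (ι₁ x, ι₂ y) for some Nash equilibrium (x, y) of G; in particular every Nash equilibrium of G′ has a disjoint support profile. -/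
open Finset

/-- Row payoff matrix of the duplicated game `G'`. -/
def dupR {n : ℕ} (R : Fin n → Fin n → ℝ) (σ : ℝ) :
    (Fin n ⊕ Fin n) → (Fin n ⊕ Fin n) → ℝ
  | Sum.inl i, Sum.inl j => R i j
  | Sum.inl i, Sum.inr j => R i j
  | Sum.inr _, _ => σ

/-- Column payoff matrix of the duplicated game `G'`. -/
def dupC {n : ℕ} (C : Fin n → Fin n → ℝ) (σ : ℝ) :
    (Fin n ⊕ Fin n) → (Fin n ⊕ Fin n) → ℝ
  | Sum.inl i, Sum.inr j => C i j
  | Sum.inr i, Sum.inr j => C i j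
  | _, Sum.inl _ => σ

/-- Lift of a row-player mixed strategy into the duplicated game (weights on `inl`). -/
def lift1 {n : ℕ} (x : Fin n → ℝ) : (Fin n ⊕ Fin n) → ℝ
  | Sum.inl i => x i
  | Sum.inr _ => 0

/-- Lift of a column-player mixed strategy into the duplicated game (weights on `inr`). -/
def lift2 {n : ℕ} (y : Fin n → ℝ) : (Fin n ⊕ Fin n) → ℝ
  | Sum.inl _ => 0
  | Sum.inr j => y j

/-!
In `G′` a row strategy `inr i` earns exactly `σ` against every mixed strategy, while `inl i`
earns strictly more than `σ`; hence in an equilibrium of `G′` the row player's payoff exceeds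
`σ`, and an equilibrium strategy puts no weight on a pure strategy that does strictly worse than
the equilibrium payoff. So the row player only uses `inl` copies and, symmetrically, the column
player only `inr` copies. Against such profiles `G′` pays exactly what `G` pays, so equilibria
correspond.
-/

section Simplex

variable {S : Type*} [Fintype S] {w f : S → ℝ}

theorem sum_mul_const_of_mem_simplex (hw : w ∈ simplex S) (c : ℝ) : ∑ i, w i * c = c := by
  rw [← sum_mul, hw.2, one_mul]

theorem lt_sum_mul_of_mem_simplex {c : ℝ} (hw : w ∈ simplex S) (hf : ∀ i, c < f i) :
    c < ∑ i, w i * f i := by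
  obtain ⟨i, -, hi⟩ : ∃ i ∈ univ, (0 : ℝ) < w i :=
    exists_lt_of_sum_lt (by simp [hw.2])
  calc c = ∑ i, w i * c := (sum_mul_const_of_mem_simplex hw c).symm
    _ < ∑ i, w i * f i :=
      sum_lt_sum (fun j _ => mul_le_mul_of_nonneg_left (hf j).le (hw.1 j))
        ⟨i, mem_univ i, mul_lt_mul_of_pos_left (hf i) hi⟩

theorem eq_zero_of_lt_sum_mul_of_mem_simplex {a : S} (hw : w ∈ simplex S)
    (hf : ∀ i, f i ≤ ∑ j, w j * f j) (ha : f a < ∑ j, w j * f j) : w a = 0 := by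
  by_contra hne
  have hpos : 0 < w a := (hw.1 a).lt_of_ne' hne
  have : ∑ i, w i * f i < ∑ i, w i * f i :=
    calc ∑ i, w i * f i < ∑ i, w i * ∑ j, w j * f j :=
          sum_lt_sum (fun i _ => mul_le_mul_of_nonneg_left (hf i) (hw.1 i))
            ⟨a, mem_univ a, mul_lt_mul_of_pos_left ha hpos⟩
      _ = ∑ i, w i * f i := sum_mul_const_of_mem_simplex hw _
  exact this.false

end Simplex

section Payoff

variable {S : Type*} [Fintype S] [DecidableEq S] (A : S → S → ℝ)

theorem payoff_pureStrat_left (s : S) (y : S → ℝ) :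
    payoff A (pureStrat s) y = ∑ j, y j * A s j := by
  simp [payoff, pureStrat, mul_comm]

theorem payoff_pureStrat_right (x : S → ℝ) (s : S) :
    payoff A x (pureStrat s) = ∑ i, x i * A i s := by
  simp [payoff, pureStrat]

theorem payoff_eq_sum_payoff_pureStrat_left (x y : S → ℝ) :
    payoff A x y = ∑ i, x i * payoff A (pureStrat i) y := by
  simp only [payoff_pureStrat_left, mul_sum]
  rw [payoff]
  exact sum_congr rfl fun i _ => sum_congr rfl fun j _ => by ring

theorem payoff_eq_sum_payoff_pureStrat_right (x y : S → ℝ) :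
    payoff A x y = ∑ j, y j * payoff A x (pureStrat j) := by
  simp only [payoff_pureStrat_right, mul_sum]
  rw [payoff, sum_comm]
  exact sum_congr rfl fun i _ => sum_congr rfl fun j _ => by ring

variable {A}

theorem lt_payoff_pureStrat_left {c : ℝ} {y : S → ℝ} {s : S} (hy : y ∈ simplex S)
    (hA : ∀ j, c < A s j) : c < payoff A (pureStrat s) y := by
  rw [payoff_pureStrat_left]
  exact lt_sum_mul_of_mem_simplex hy hA

theorem lt_payoff_pureStrat_right {c : ℝ} {x : S → ℝ} {s : S} (hx : x ∈ simplex S)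
    (hA : ∀ i, c < A i s) : c < payoff A x (pureStrat s) := by
  rw [payoff_pureStrat_right]
  exact lt_sum_mul_of_mem_simplex hx hA

theorem lt_payoff {c : ℝ} {x y : S → ℝ} (hx : x ∈ simplex S) (hy : y ∈ simplex S)
    (hA : ∀ i j, c < A i j) : c < payoff A x y := by
  rw [payoff_eq_sum_payoff_pureStrat_left]
  exact lt_sum_mul_of_mem_simplex hx fun i => lt_payoff_pureStrat_left hy (hA i)

theorem eq_zero_of_payoff_pureStrat_left_lt {x y : S → ℝ} {a : S} (hx : x ∈ simplex S)
    (hbest : ∀ s, payoff A (pureStrat s) y ≤ payoff A x y)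
    (ha : payoff A (pureStrat a) y < payoff A x y) : x a = 0 := by
  rw [payoff_eq_sum_payoff_pureStrat_left A x y] at hbest ha
  exact eq_zero_of_lt_sum_mul_of_mem_simplex hx hbest ha

theorem eq_zero_of_payoff_pureStrat_right_lt {x y : S → ℝ} {a : S} (hy : y ∈ simplex S)
    (hbest : ∀ s, payoff A x (pureStrat s) ≤ payoff A x y)
    (ha : payoff A x (pureStrat a) < payoff A x y) : y a = 0 := by
  rw [payoff_eq_sum_payoff_pureStrat_right A x y] at hbest ha
  exact eq_zero_of_lt_sum_mul_of_mem_simplex hy hbest ha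

end Payoff

section Duplicated

variable {n : ℕ}

theorem lift1_mem_simplex_iff {x : Fin n → ℝ} :
    lift1 x ∈ simplex (Fin n ⊕ Fin n) ↔ x ∈ simplex (Fin n) := by
  simp [simplex, Fintype.sum_sum_type, Sum.forall, lift1]

theorem lift2_mem_simplex_iff {y : Fin n → ℝ} :
    lift2 y ∈ simplex (Fin n ⊕ Fin n) ↔ y ∈ simplex (Fin n) := by
  simp [simplex, Fintype.sum_sum_type, Sum.forall, lift2]

theorem supp_lift1_inter_supp_lift2 (x y : Fin n → ℝ) :
    supp (lift1 x) ∩ supp (lift2 y) = ∅ := by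
  ext (i | i) <;> simp [supp, lift1, lift2]

theorem lift1_pureStrat (i : Fin n) : lift1 (pureStrat i) = pureStrat (Sum.inl i) := by
  ext (j | j) <;> simp [lift1, pureStrat]

theorem lift2_pureStrat (j : Fin n) : lift2 (pureStrat j) = pureStrat (Sum.inr j) := by
  ext (i | i) <;> simp [lift2, pureStrat]

variable (R C : Fin n → Fin n → ℝ) (σ : ℝ)

theorem payoff_dupR_lift (x y : Fin n → ℝ) :
    payoff (dupR R σ) (lift1 x) (lift2 y) = payoff R x y := by
  simp [payoff, Fintype.sum_sum_type, lift1, lift2, dupR]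

theorem payoff_dupC_lift (x y : Fin n → ℝ) :
    payoff (dupC C σ) (lift1 x) (lift2 y) = payoff C x y := by
  simp [payoff, Fintype.sum_sum_type, lift1, lift2, dupC]

theorem payoff_dupR_pureStrat_inr {y' : Fin n ⊕ Fin n → ℝ} (hy' : y' ∈ simplex _) (i : Fin n) :
    payoff (dupR R σ) (pureStrat (Sum.inr i)) y' = σ := by
  rw [payoff_pureStrat_left]
  exact sum_mul_const_of_mem_simplex hy' σ

theorem payoff_dupC_pureStrat_inl {x' : Fin n ⊕ Fin n → ℝ} (hx' : x' ∈ simplex _) (j : Fin n) :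
    payoff (dupC C σ) x' (pureStrat (Sum.inl j)) = σ := by
  rw [payoff_pureStrat_right]
  convert sum_mul_const_of_mem_simplex hx' σ using 3 with a
  cases a <;> rfl

variable {R C σ}

theorem lt_payoff_dupR_pureStrat_inl (hσR : ∀ i j, σ < R i j) {y' : Fin n ⊕ Fin n → ℝ}
    (hy' : y' ∈ simplex _) (i : Fin n) : σ < payoff (dupR R σ) (pureStrat (Sum.inl i)) y' :=
  lt_payoff_pureStrat_left hy' fun b => by cases b <;> exact hσR _ _

theorem lt_payoff_dupC_pureStrat_inr (hσC : ∀ i j, σ < C i j) {x' : Fin n ⊕ Fin n → ℝ}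
    (hx' : x' ∈ simplex _) (j : Fin n) : σ < payoff (dupC C σ) x' (pureStrat (Sum.inr j)) :=
  lt_payoff_pureStrat_right hx' fun a => by cases a <;> exact hσC _ _

theorem isEpsNash_dup_lift_iff (hσR : ∀ i j, σ < R i j) (hσC : ∀ i j, σ < C i j)
    {x y : Fin n → ℝ} :
    IsEpsNash (dupR R σ) (dupC C σ) (lift1 x) (lift2 y) 0 ↔ IsEpsNash R C x y 0 := by
  simp only [IsEpsNash, add_zero, lift1_mem_simplex_iff, lift2_mem_simplex_iff, Sum.forall,
    ← lift1_pureStrat, ← lift2_pureStrat, payoff_dupR_lift, payoff_dupC_lift]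
  constructor
  · rintro ⟨hx, hy, ⟨hr, -⟩, -, hc⟩
    exact ⟨hx, hy, hr, hc⟩
  · rintro ⟨hx, hy, hr, hc⟩
    refine ⟨hx, hy, ⟨hr, fun i => ?_⟩, fun j => ?_, hc⟩
    · rw [lift2_pureStrat, payoff_dupR_pureStrat_inr R σ (lift2_mem_simplex_iff.2 hy)]
      exact (lt_payoff hx hy hσR).le
    · rw [lift1_pureStrat, payoff_dupC_pureStrat_inl C σ (lift1_mem_simplex_iff.2 hx)]
      exact (lt_payoff hx hy hσC).le

theorem exists_eq_lift1_of_isEpsNash_dup (hσR : ∀ i j, σ < R i j)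
    {x' y' : Fin n ⊕ Fin n → ℝ} (h : IsEpsNash (dupR R σ) (dupC C σ) x' y' 0) :
    ∃ x, x' = lift1 x := by
  obtain ⟨hx', hy', hr, -⟩ := h
  simp only [add_zero] at hr
  refine ⟨fun i => x' (Sum.inl i), funext fun a => ?_⟩
  rcases a with i | i
  · rfl
  · refine eq_zero_of_payoff_pureStrat_left_lt hx' hr ?_
    calc payoff (dupR R σ) (pureStrat (Sum.inr i)) y' = σ := payoff_dupR_pureStrat_inr R σ hy' i
      _ < payoff (dupR R σ) (pureStrat (Sum.inl i)) y' := lt_payoff_dupR_pureStrat_inl hσR hy' i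
      _ ≤ payoff (dupR R σ) x' y' := hr _

theorem exists_eq_lift2_of_isEpsNash_dup (hσC : ∀ i j, σ < C i j)
    {x' y' : Fin n ⊕ Fin n → ℝ} (h : IsEpsNash (dupR R σ) (dupC C σ) x' y' 0) :
    ∃ y, y' = lift2 y := by
  obtain ⟨hx', hy', -, hc⟩ := h
  simp only [add_zero] at hc
  refine ⟨fun j => y' (Sum.inr j), funext fun b => ?_⟩
  rcases b with j | j
  · refine eq_zero_of_payoff_pureStrat_right_lt hy' hc ?_
    calc payoff (dupC C σ) x' (pureStrat (Sum.inl j)) = σ := payoff_dupC_pureStrat_inl C σ hx' j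
      _ < payoff (dupC C σ) x' (pureStrat (Sum.inr j)) := lt_payoff_dupC_pureStrat_inr hσC hx' j
      _ ≤ payoff (dupC C σ) x' y' := hc _
  · rfl

end Duplicated

theorem stmt11 {n : ℕ} (R C : Fin n → Fin n → ℝ) (σ : ℝ)
    (hσR : ∀ i j, σ < R i j) (hσC : ∀ i j, σ < C i j) :
    (∀ x y : Fin n → ℝ, IsEpsNash R C x y 0 →
      IsEpsNash (dupR R σ) (dupC C σ) (lift1 x) (lift2 y) 0 ∧
      supp (lift1 x) ∩ supp (lift2 y) = ∅) ∧
    (∀ x' y' : (Fin n ⊕ Fin n) → ℝ, IsEpsNash (dupR R σ) (dupC C σ) x' y' 0 →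
      (∃ x y : Fin n → ℝ, IsEpsNash R C x y 0 ∧ x' = lift1 x ∧ y' = lift2 y) ∧
      supp x' ∩ supp y' = ∅) := by
  refine ⟨fun x y h => ⟨(isEpsNash_dup_lift_iff hσR hσC).2 h, supp_lift1_inter_supp_lift2 x y⟩,
    fun x' y' h => ?_⟩
  obtain ⟨x, rfl⟩ := exists_eq_lift1_of_isEpsNash_dup hσR h
  obtain ⟨y, rfl⟩ := exists_eq_lift2_of_isEpsNash_dup hσC h
  exact ⟨⟨x, y, (isEpsNash_dup_lift_iff hσR hσC).1 h, rfl, rfl⟩, supp_lift1_inter_supp_lift2 x y⟩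
end
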